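/- arXiv:2312.13628 — 4 statements merged into one kernel-verified Lean document; each statement's English description precedes it below -/
import Mathlib

section
/- For any real numbers a, b, c and positive reals σ1, σy, σ2, σ3, writing S := σ2² + c²·σy², the vector w := (a·σ2²/S, c·σy²/S, −b·c·σy²/S) ∈ ℝ³ satisfies the normal equations Σ₀ · w = m, where m := (σ1²·a, σ1²·a²·c + σy²·c, 0). Consequently Σ₀⁻¹ · m = w (Equation (2) of the paper). -/
/-!
`Σ₀` is tridiagonal with determinant `σ1² σ3² S`, hence invertible when `σ1`, `σ3` and `S` are
nonzero. The normal equations `Σ₀ w = m` are a rational identity in the parameters with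
denominator `S`, and invertibility turns them into `Σ₀⁻¹ m = w`.
-/

open Matrix

section Moments

variable {K : Type*}

def secondMoment [CommRing K] (a b c σ1 σy σ2 σ3 : K) : Matrix (Fin 3) (Fin 3) K :=
  !![σ1 ^ 2, σ1 ^ 2 * a * c, 0;
    σ1 ^ 2 * a * c, σ1 ^ 2 * a ^ 2 * c ^ 2 + σ2 ^ 2 + σ3 ^ 2 * b ^ 2 + σy ^ 2 * c ^ 2, σ3 ^ 2 * b;
    0, σ3 ^ 2 * b, σ3 ^ 2]

def crossMoment [CommRing K] (a c σ1 σy : K) : Fin 3 → K :=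
  ![σ1 ^ 2 * a, σ1 ^ 2 * a ^ 2 * c + σy ^ 2 * c, 0]

def ermWeight [Field K] (a b c σy σ2 : K) : Fin 3 → K :=
  let S := σ2 ^ 2 + c ^ 2 * σy ^ 2
  ![a * σ2 ^ 2 / S, c * σy ^ 2 / S, -(b * c * σy ^ 2) / S]

theorem det_secondMoment [CommRing K] (a b c σ1 σy σ2 σ3 : K) :
    (secondMoment a b c σ1 σy σ2 σ3).det = σ1 ^ 2 * σ3 ^ 2 * (σ2 ^ 2 + c ^ 2 * σy ^ 2) := by
  rw [secondMoment, det_fin_three]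
  simp only [of_apply, cons_val', cons_val_zero, cons_val_one, cons_val_two, empty_val',
    cons_val_fin_one, head_cons, tail_cons, head_fin_const]
  ring

theorem secondMoment_mulVec_ermWeight [Field K] (a b c σ1 σy σ2 σ3 : K)
    (hS : σ2 ^ 2 + c ^ 2 * σy ^ 2 ≠ 0) :
    secondMoment a b c σ1 σy σ2 σ3 *ᵥ ermWeight a b c σy σ2 = crossMoment a c σ1 σy := by
  ext i
  fin_cases i <;>
    simp only [secondMoment, ermWeight, crossMoment, mulVec, dotProduct, Fin.sum_univ_three,
      Fin.zero_eta, Fin.mk_one, Fin.reduceFinMk, Fin.isValue, of_apply, cons_val', cons_val_fin_one,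
      cons_val_zero, cons_val_one, cons_val, zero_mul, zero_add, add_zero] <;>
    field_simp <;> ring

end Moments

theorem erm_weight_solves_normal_equations_general
    (a b c σ1 σy σ2 σ3 : ℝ)
    (hσ1 : 0 < σ1) (hσ2 : 0 < σ2) (hσ3 : 0 < σ3)
    (S : ℝ) (hS : S = σ2 ^ 2 + c ^ 2 * σy ^ 2)
    (Sig0 : Matrix (Fin 3) (Fin 3) ℝ)
    (hSig0 : Sig0 = !![σ1 ^ 2, σ1 ^ 2 * a * c, 0;
        σ1 ^ 2 * a * c, σ1 ^ 2 * a ^ 2 * c ^ 2 + σ2 ^ 2 + σ3 ^ 2 * b ^ 2 + σy ^ 2 * c ^ 2,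
          σ3 ^ 2 * b;
        0, σ3 ^ 2 * b, σ3 ^ 2])
    (w m : Fin 3 → ℝ)
    (hw : w = ![a * σ2 ^ 2 / S, c * σy ^ 2 / S, -(b * c * σy ^ 2) / S])
    (hm : m = ![σ1 ^ 2 * a, σ1 ^ 2 * a ^ 2 * c + σy ^ 2 * c, 0]) :
    Sig0 *ᵥ w = m ∧ Sig0⁻¹ *ᵥ m = w := by
  subst hS
  obtain rfl : Sig0 = secondMoment a b c σ1 σy σ2 σ3 := hSig0
  obtain rfl : w = ermWeight a b c σy σ2 := hw
  obtain rfl : m = crossMoment a c σ1 σy := hm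
  have normal := secondMoment_mulVec_ermWeight a b c σ1 σy σ2 σ3 (by positivity)
  have hdet : IsUnit (secondMoment a b c σ1 σy σ2 σ3).det := by
    rw [det_secondMoment]
    exact IsUnit.mk0 _ (by positivity)
  have := invertibleOfIsUnitDet _ hdet
  exact ⟨normal, inv_mulVec_eq_vec normal.symm⟩

/-- The ERM weight vector `w` of Equation (2) satisfies the normal equations
`Sig0 ⬝ w = m`, and consequently `Sig0⁻¹ ⬝ m = w`. -/
theorem erm_weight_solves_normal_equations
    (a b c σ1 σy σ2 σ3 : ℝ)
    (hσ1 : 0 < σ1) (hσy : 0 < σy) (hσ2 : 0 < σ2) (hσ3 : 0 < σ3)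
    (S : ℝ) (hS : S = σ2 ^ 2 + c ^ 2 * σy ^ 2)
    (Sig0 : Matrix (Fin 3) (Fin 3) ℝ)
    (hSig0 : Sig0 = !![σ1 ^ 2, σ1 ^ 2 * a * c, 0;
        σ1 ^ 2 * a * c, σ1 ^ 2 * a ^ 2 * c ^ 2 + σ2 ^ 2 + σ3 ^ 2 * b ^ 2 + σy ^ 2 * c ^ 2,
          σ3 ^ 2 * b;
        0, σ3 ^ 2 * b, σ3 ^ 2])
    (w m : Fin 3 → ℝ)
    (hw : w = ![a * σ2 ^ 2 / S, c * σy ^ 2 / S, -(b * c * σy ^ 2) / S])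
    (hm : m = ![σ1 ^ 2 * a, σ1 ^ 2 * a ^ 2 * c + σy ^ 2 * c, 0]) :
    Sig0 *ᵥ w = m ∧ Sig0⁻¹ *ᵥ m = w :=
  erm_weight_solves_normal_equations_general a b c σ1 σy σ2 σ3 hσ1 hσ2 hσ3 S hS Sig0 hSig0 w m hw hm
end

section
/- Under the linear structural causal model, the solution of the population least-squares problem is given by Equation (2): the matrix Σ := E[x·xᵀ] ∈ ℝ^{3×3} is invertible and the vector Σ⁻¹ · E[x·y] equals w = (a·σ2²/S, c·σy²/S, −b·c·σy²/S), where S := σ2² + c²·σy². -/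
/-!
Writing `x` and `y` as linear combinations of the noises `u = (u1, uy, u2, u3)`, which are centered,
independent and hence orthogonal in `L²`, every second moment `E[(A ⬝ u) (B ⬝ u)]` equals
`∑ₖ Aₖ Bₖ σₖ²`. This gives `Σ` and `E[x y]` in closed form; then `det Σ = σ1² σ3² S ≠ 0`, and `w`
is checked to solve the normal equations `Σ w = E[x y]`.
-/

open MeasureTheory ProbabilityTheory Matrix

namespace ProbabilityTheory

variable {Ω : Type*} [MeasurableSpace Ω] {P : Measure Ω} {X : Ω → ℝ} {μ : ℝ} {v : NNReal}

lemma HasLaw.integral_gaussianReal (hX : HasLaw X (gaussianReal μ v) P) : P[X] = μ := by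
  rw [hX.integral_eq, integral_id_gaussianReal]

lemma HasLaw.integral_sq_gaussianReal (hX : HasLaw X (gaussianReal μ v) P) :
    ∫ ω, X ω ^ 2 ∂P = v + μ ^ 2 := by
  have := hX.isProbabilityMeasure
  have hvar := variance_eq_sub hX.hasGaussianLaw.memLp_two
  rw [hX.variance_eq, variance_id_gaussianReal, hX.integral_gaussianReal] at hvar
  simp only [Pi.pow_apply] at hvar
  linarith

end ProbabilityTheory

lemma integral_dotProduct_mul_dotProduct {Ω ι : Type*} [MeasurableSpace Ω] {P : Measure Ω}
    [Fintype ι] {U : ι → Ω → ℝ} (hU : ∀ k, MemLp (U k) 2 P)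
    (horth : Pairwise fun k l => ∫ ω, U k ω * U l ω ∂P = 0) (A B : ι → ℝ) :
    ∫ ω, (A ⬝ᵥ fun k => U k ω) * (B ⬝ᵥ fun k => U k ω) ∂P
      = ∑ k, A k * B k * ∫ ω, U k ω ^ 2 ∂P := by
  have hint : ∀ k l, Integrable (fun ω => A k * B l * (U k ω * U l ω)) P := fun k l =>
    ((hU k).integrable_mul (hU l)).const_mul _
  have hexpand : ∀ ω, (A ⬝ᵥ fun k => U k ω) * (B ⬝ᵥ fun k => U k ω)
      = ∑ k, ∑ l, A k * B l * (U k ω * U l ω) := fun ω => by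
    simp only [dotProduct, Finset.sum_mul_sum]
    exact Finset.sum_congr rfl fun k _ => Finset.sum_congr rfl fun l _ => by ring
  simp only [hexpand]
  rw [integral_finsetSum _ fun k _ => integrable_finsetSum _ fun l _ => hint k l]
  refine Finset.sum_congr rfl fun k _ => ?_
  rw [integral_finsetSum _ fun l _ => hint k l, Finset.sum_eq_single k]
  · rw [← integral_const_mul]
    simp only [sq]
  · intro l _ hlk
    rw [integral_const_mul, horth (Ne.symm hlk), mul_zero]
  · simp

lemma linearSCM_secondMoments {Ω : Type*} [MeasurableSpace Ω] {P : Measure Ω}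
    (a b c : ℝ) (u1 uy u2 u3 : Ω → ℝ) (V : Fin 4 → ℝ)
    (hU : ∀ k, MemLp (![u1, uy, u2, u3] k) 2 P)
    (horth : Pairwise fun k l => ∫ ω, ![u1, uy, u2, u3] k ω * ![u1, uy, u2, u3] l ω ∂P = 0)
    (hV : ∀ k, ∫ ω, ![u1, uy, u2, u3] k ω ^ 2 ∂P = V k) :
    let y : Ω → ℝ := fun ω => a * u1 ω + uy ω
    let x : Fin 3 → Ω → ℝ := ![u1, fun ω => b * u3 ω + c * y ω + u2 ω, u3]
    ((fun i j => ∫ ω, x i ω * x j ω ∂P) : Matrix (Fin 3) (Fin 3) ℝ) = !![V 0, c * a * V 0, 0;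
      c * a * V 0, c ^ 2 * a ^ 2 * V 0 + c ^ 2 * V 1 + V 2 + b ^ 2 * V 3, b * V 3;
      0, b * V 3, V 3] ∧
    (fun i => ∫ ω, x i ω * y ω ∂P) = ![a * V 0, c * a ^ 2 * V 0 + c * V 1, 0] := by
  intro y x
  have hmoment := integral_dotProduct_mul_dotProduct hU horth
  have hxU : ∀ i ω, x i ω
      = ![![1, 0, 0, 0], ![c * a, c, 1, b], ![0, 0, 0, 1]] i ⬝ᵥ fun k => ![u1, uy, u2, u3] k ω := by
    intro i ω
    fin_cases i <;>
      simp only [x, y, dotProduct, Fin.sum_univ_four, Fin.isValue, Fin.zero_eta, Fin.mk_one,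
        Fin.reduceFinMk, cons_val', cons_val_fin_one, cons_val_zero, cons_val_one, cons_val] <;>
      ring
  have hyU : ∀ ω, y ω = ![a, 1, 0, 0] ⬝ᵥ fun k => ![u1, uy, u2, u3] k ω := fun ω => by
    simp [y, dotProduct, Fin.sum_univ_four]
  constructor
  · ext i j
    simp only [hxU, hmoment, hV]
    fin_cases i <;> fin_cases j <;>
      simp only [Fin.sum_univ_four, Fin.isValue, Fin.zero_eta, Fin.mk_one, Fin.reduceFinMk,
        cons_val', cons_val_fin_one, cons_val_zero, cons_val_one, cons_val, of_apply] <;>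
      ring
  · ext i
    simp only [hxU, hyU, hmoment, hV]
    fin_cases i <;>
      simp only [Fin.sum_univ_four, Fin.isValue, Fin.zero_eta, Fin.mk_one, Fin.reduceFinMk,
        cons_val', cons_val_fin_one, cons_val_zero, cons_val_one, cons_val] <;>
      ring

lemma linearSCM_normalEquations (a b c v1 vy v2 v3 : ℝ) (h1 : v1 ≠ 0) (h3 : v3 ≠ 0)
    (hS : v2 + c ^ 2 * vy ≠ 0) :
    let Sig : Matrix (Fin 3) (Fin 3) ℝ := !![v1, c * a * v1, 0;
      c * a * v1, c ^ 2 * a ^ 2 * v1 + c ^ 2 * vy + v2 + b ^ 2 * v3, b * v3;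
      0, b * v3, v3]
    IsUnit Sig.det ∧ Sig⁻¹ *ᵥ ![a * v1, c * a ^ 2 * v1 + c * vy, 0]
      = ![a * v2 / (v2 + c ^ 2 * vy), c * vy / (v2 + c ^ 2 * vy),
          -(b * c * vy) / (v2 + c ^ 2 * vy)] := by
  intro Sig
  have hdet : Sig.det = v1 * v3 * (v2 + c ^ 2 * vy) := by
    simp only [Sig, det_fin_three, of_apply, cons_val', cons_val_zero, cons_val_fin_one,
      cons_val_one, cons_val]
    ring
  have hunit : IsUnit Sig.det := by rw [hdet]; exact isUnit_iff_ne_zero.mpr (by positivity)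
  refine ⟨hunit, ?_⟩
  have := invertibleOfIsUnitDet Sig hunit
  refine inv_mulVec_eq_vec ?_
  ext i
  fin_cases i <;>
    simp only [Sig, mulVec, dotProduct, Fin.sum_univ_three, Fin.isValue, Fin.zero_eta, Fin.mk_one,
      Fin.reduceFinMk, of_apply, cons_val', cons_val_fin_one, cons_val_zero, cons_val_one,
      cons_val] <;>
    field_simp <;> ring

theorem erm_solution_of_linear_scm_general
    {Ω : Type*} [MeasurableSpace Ω] (P : Measure Ω)
    (a b c σ1 σy σ2 σ3 : ℝ)
    (hσ1 : 0 < σ1) (hσ2 : 0 < σ2) (hσ3 : 0 < σ3)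
    (u1 uy u2 u3 : Ω → ℝ)
    (hm1 : Measurable u1) (hmy : Measurable uy)
    (hm2 : Measurable u2) (hm3 : Measurable u3)
    (hindep : iIndepFun ![u1, uy, u2, u3] P)
    (hlaw1 : P.map u1 = gaussianReal 0 (Real.toNNReal (σ1 ^ 2)))
    (hlawy : P.map uy = gaussianReal 0 (Real.toNNReal (σy ^ 2)))
    (hlaw2 : P.map u2 = gaussianReal 0 (Real.toNNReal (σ2 ^ 2)))
    (hlaw3 : P.map u3 = gaussianReal 0 (Real.toNNReal (σ3 ^ 2)))
    (x1 y x2 x3 : Ω → ℝ)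
    (hx1 : x1 = u1)
    (hy : y = fun ω => a * x1 ω + uy ω)
    (hx3 : x3 = u3)
    (hx2 : x2 = fun ω => b * x3 ω + c * y ω + u2 ω)
    (x : Fin 3 → Ω → ℝ) (hx : x = ![x1, x2, x3])
    (Sig : Matrix (Fin 3) (Fin 3) ℝ)
    (hSig : Sig = fun i j => ∫ ω, x i ω * x j ω ∂P)
    (m : Fin 3 → ℝ) (hm : m = fun i => ∫ ω, x i ω * y ω ∂P)
    (S : ℝ) (hS : S = σ2 ^ 2 + c ^ 2 * σy ^ 2) :
    IsUnit Sig.det ∧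
    Sig⁻¹ *ᵥ m = ![a * σ2 ^ 2 / S, c * σy ^ 2 / S, -(b * c * σy ^ 2) / S] := by
  set U : Fin 4 → Ω → ℝ := ![u1, uy, u2, u3]
  set V : Fin 4 → ℝ := ![σ1 ^ 2, σy ^ 2, σ2 ^ 2, σ3 ^ 2]
  have hU : ∀ k, HasLaw (U k) (gaussianReal 0 (V k).toNNReal) P := fun k => by
    fin_cases k
    exacts [⟨hm1.aemeasurable, hlaw1⟩, ⟨hmy.aemeasurable, hlawy⟩, ⟨hm2.aemeasurable, hlaw2⟩,
      ⟨hm3.aemeasurable, hlaw3⟩]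
  have horth : Pairwise fun k l => ∫ ω, U k ω * U l ω ∂P = 0 := fun k l hkl => by
    show ∫ ω, U k ω * U l ω ∂P = 0
    rw [(hindep.indepFun hkl).integral_fun_mul_eq_mul_integral
      (hU k).aemeasurable.aestronglyMeasurable (hU l).aemeasurable.aestronglyMeasurable,
      (hU k).integral_gaussianReal, zero_mul]
  have hV : ∀ k, ∫ ω, U k ω ^ 2 ∂P = V k := fun k => by
    rw [(hU k).integral_sq_gaussianReal,
      Real.coe_toNNReal _ (by fin_cases k <;> exact sq_nonneg _)]
    ring
  obtain ⟨hSig', hm'⟩ := linearSCM_secondMoments a b c u1 uy u2 u3 V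
    (fun k => (hU k).hasGaussianLaw.memLp_two) horth hV
  subst hx hx1 hx2 hx3 hy hSig hm hS
  exact hSig' ▸ hm' ▸ linearSCM_normalEquations a b c (σ1 ^ 2) (σy ^ 2) (σ2 ^ 2) (σ3 ^ 2)
    (by positivity) (by positivity) (by positivity)

/-- Under the linear SCM, the second-moment matrix `Σ = E[x xᵀ]` is invertible
and the population least-squares solution `Σ⁻¹ E[x y]` equals the ERM weight
vector `w` of Equation (2). -/
theorem erm_solution_of_linear_scm
    {Ω : Type*} [MeasurableSpace Ω] (P : Measure Ω) [IsProbabilityMeasure P]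
    (a b c σ1 σy σ2 σ3 : ℝ)
    (hσ1 : 0 < σ1) (hσy : 0 < σy) (hσ2 : 0 < σ2) (hσ3 : 0 < σ3)
    (u1 uy u2 u3 : Ω → ℝ)
    (hm1 : Measurable u1) (hmy : Measurable uy)
    (hm2 : Measurable u2) (hm3 : Measurable u3)
    (hindep : iIndepFun ![u1, uy, u2, u3] P)
    (hlaw1 : P.map u1 = gaussianReal 0 (Real.toNNReal (σ1 ^ 2)))
    (hlawy : P.map uy = gaussianReal 0 (Real.toNNReal (σy ^ 2)))
    (hlaw2 : P.map u2 = gaussianReal 0 (Real.toNNReal (σ2 ^ 2)))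
    (hlaw3 : P.map u3 = gaussianReal 0 (Real.toNNReal (σ3 ^ 2)))
    (x1 y x2 x3 : Ω → ℝ)
    (hx1 : x1 = u1)
    (hy : y = fun ω => a * x1 ω + uy ω)
    (hx3 : x3 = u3)
    (hx2 : x2 = fun ω => b * x3 ω + c * y ω + u2 ω)
    (x : Fin 3 → Ω → ℝ) (hx : x = ![x1, x2, x3])
    (Sig : Matrix (Fin 3) (Fin 3) ℝ)
    (hSig : Sig = fun i j => ∫ ω, x i ω * x j ω ∂P)
    (m : Fin 3 → ℝ) (hm : m = fun i => ∫ ω, x i ω * y ω ∂P)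
    (S : ℝ) (hS : S = σ2 ^ 2 + c ^ 2 * σy ^ 2) :
    IsUnit Sig.det ∧
    Sig⁻¹ *ᵥ m = ![a * σ2 ^ 2 / S, c * σy ^ 2 / S, -(b * c * σy ^ 2) / S] :=
  erm_solution_of_linear_scm_general P a b c σ1 σy σ2 σ3 hσ1 hσ2 hσ3 u1 uy u2 u3 hm1 hmy hm2 hm3
    hindep hlaw1 hlawy hlaw2 hlaw3 x1 y x2 x3 hx1 hy hx3 hx2 x hx Sig hSig m hm S hS
end

section
/- Under the linear structural causal model, the weight vector w := (a·σ2²/S, c·σy²/S, −b·c·σy²/S) with S := σ2² + c²·σy² is a global minimizer of the population squared-error risk: for every v ∈ ℝ³, E[(y − ⟨w, x⟩)²] ≤ E[(y − ⟨v, x⟩)²], where ⟨·,·⟩ is the standard inner product on ℝ³. -/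
/-!
The residual `y - ⟪q, x⟫` is the linear combination of the independent centred Gaussian noises
`u1, uy, u2, u3` with coefficients `(a - q₀ - c a q₁, 1 - c q₁, -q₁, -(q₂ + b q₁))`, so the risk of
`q` is the sum of the squared coefficients weighted by the noise variances. The first and last
coefficients vanish at `w`, and completing the square in `q₁` gives
`(1 - c q₁)² σy² + q₁² σ2² = σy² σ2² / S + S (q₁ - c σy² / S)²`, which is minimal at `w₁ = c σy² / S`.
-/

open MeasureTheory ProbabilityTheory
open scoped NNReal

section GaussianNoise

variable {Ω ι : Type*} [MeasurableSpace Ω] {P : Measure Ω}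

section Law

variable {u : Ω → ℝ} {m : ℝ} {v : ℝ≥0}

lemma aemeasurable_of_map_eq_gaussianReal (h : P.map u = gaussianReal m v) :
    AEMeasurable u P :=
  aemeasurable_of_map_neZero (h ▸ inferInstance)

lemma memLp_of_map_eq_gaussianReal (h : P.map u = gaussianReal m v) (p : ℝ≥0) :
    MemLp u p P :=
  (h ▸ memLp_id_gaussianReal p).comp_of_map (aemeasurable_of_map_eq_gaussianReal h)

lemma integral_eq_of_map_eq_gaussianReal (h : P.map u = gaussianReal m v) :
    ∫ ω, u ω ∂P = m := by
  rw [← integral_id_gaussianReal (μ := m) (v := v), ← h]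
  exact (integral_map (aemeasurable_of_map_eq_gaussianReal h) aestronglyMeasurable_id).symm

lemma variance_eq_of_map_eq_gaussianReal (h : P.map u = gaussianReal m v) :
    Var[u; P] = v := by
  rw [← variance_id_gaussianReal (μ := m) (v := v), ← h,
    variance_id_map (aemeasurable_of_map_eq_gaussianReal h)]

end Law

variable [Fintype ι] {U : ι → Ω → ℝ}

lemma variance_sum_mul_of_iIndepFun (hL2 : ∀ i, MemLp (U i) 2 P) (hindep : iIndepFun U P)
    (α : ι → ℝ) :
    Var[fun ω ↦ ∑ i, α i * U i ω; P] = ∑ i, α i ^ 2 * Var[U i; P] := by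
  have hindep' : iIndepFun (fun i ω ↦ α i * U i ω) P :=
    hindep.comp (fun i x ↦ α i * x) fun i ↦ measurable_const_mul (α i)
  have hsum := IndepFun.variance_sum (s := Finset.univ) (fun i _ ↦ (hL2 i).const_mul (α i))
    fun i _ j _ hij ↦ hindep'.indepFun hij
  simpa only [Finset.sum_fn, variance_const_mul] using hsum

lemma integral_sq_sum_mul_of_iIndepFun_gaussianReal {v : ι → ℝ≥0} (hindep : iIndepFun U P)
    (hlaw : ∀ i, P.map (U i) = gaussianReal 0 (v i)) (α : ι → ℝ) :
    ∫ ω, (∑ i, α i * U i ω) ^ 2 ∂P = ∑ i, α i ^ 2 * v i := by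
  have hL2 i : MemLp (U i) 2 P := memLp_of_map_eq_gaussianReal (hlaw i) 2
  have hL1 i : Integrable (U i) P :=
    memLp_one_iff_integrable.1 (by simpa using memLp_of_map_eq_gaussianReal (hlaw i) 1)
  have hmean : ∫ ω, ∑ i, α i * U i ω ∂P = 0 := by
    rw [integral_finsetSum _ fun i _ ↦ (hL1 i).const_mul (α i)]
    simp [integral_const_mul, integral_eq_of_map_eq_gaussianReal (hlaw _)]
  have hmeas : AEMeasurable (fun ω ↦ ∑ i, α i * U i ω) P :=
    Finset.aemeasurable_fun_sum _ fun i _ ↦ (hL2 i).aemeasurable.const_mul (α i)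
  rw [← variance_of_integral_eq_zero hmeas hmean, variance_sum_mul_of_iIndepFun hL2 hindep]
  simp [variance_eq_of_map_eq_gaussianReal (hlaw _)]

end GaussianNoise

lemma one_sub_mul_sq_mul_add_sq_mul {p q c t : ℝ} (h : q + c ^ 2 * p ≠ 0) :
    (1 - c * t) ^ 2 * p + t ^ 2 * q
      = p * q / (q + c ^ 2 * p) + (q + c ^ 2 * p) * (t - c * p / (q + c ^ 2 * p)) ^ 2 := by
  field_simp
  ring

theorem erm_weight_is_global_minimizer_general
    {Ω : Type*} [MeasurableSpace Ω] (P : Measure Ω)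
    (a b c σ1 σy σ2 σ3 : ℝ)
    (hσ2 : 0 < σ2)
    (u1 uy u2 u3 : Ω → ℝ)
    (hindep : iIndepFun ![u1, uy, u2, u3] P)
    (hlaw1 : P.map u1 = gaussianReal 0 (Real.toNNReal (σ1 ^ 2)))
    (hlawy : P.map uy = gaussianReal 0 (Real.toNNReal (σy ^ 2)))
    (hlaw2 : P.map u2 = gaussianReal 0 (Real.toNNReal (σ2 ^ 2)))
    (hlaw3 : P.map u3 = gaussianReal 0 (Real.toNNReal (σ3 ^ 2)))
    (x1 y x2 x3 : Ω → ℝ)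
    (hx1 : x1 = u1)
    (hy : y = fun ω => a * x1 ω + uy ω)
    (hx3 : x3 = u3)
    (hx2 : x2 = fun ω => b * x3 ω + c * y ω + u2 ω)
    (x : Fin 3 → Ω → ℝ) (hx : x = ![x1, x2, x3])
    (S : ℝ) (hS : S = σ2 ^ 2 + c ^ 2 * σy ^ 2)
    (w : Fin 3 → ℝ)
    (hw : w = ![a * σ2 ^ 2 / S, c * σy ^ 2 / S, -(b * c * σy ^ 2) / S]) :
    ∀ v : Fin 3 → ℝ,
      (∫ ω, (y ω - ∑ i, w i * x i ω) ^ 2 ∂P) ≤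
        ∫ ω, (y ω - ∑ i, v i * x i ω) ^ 2 ∂P := by
  intro v
  have hlaw : ∀ i, P.map (![u1, uy, u2, u3] i)
      = gaussianReal 0 (![σ1 ^ 2, σy ^ 2, σ2 ^ 2, σ3 ^ 2] i).toNNReal := by
    intro i
    fin_cases i <;> assumption
  have hrisk (q : Fin 3 → ℝ) : ∫ ω, (y ω - ∑ i, q i * x i ω) ^ 2 ∂P
      = (a - q 0 - c * a * q 1) ^ 2 * σ1 ^ 2 + (q 2 + b * q 1) ^ 2 * σ3 ^ 2
        + ((1 - c * q 1) ^ 2 * σy ^ 2 + q 1 ^ 2 * σ2 ^ 2) := by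
    have hresidual ω : y ω - ∑ i, q i * x i ω = ∑ i, ![a - q 0 - c * a * q 1, 1 - c * q 1,
        -q 1, -(q 2 + b * q 1)] i * ![u1, uy, u2, u3] i ω := by
      simp [hx, hy, hx1, hx2, hx3, Fin.sum_univ_three, Fin.sum_univ_four]
      ring
    simp_rw [hresidual, integral_sq_sum_mul_of_iIndepFun_gaussianReal hindep hlaw]
    simp [Fin.sum_univ_four, sq_nonneg]
    ring
  have hSpos : 0 < S := by rw [hS]; positivity
  have hsplit t : (1 - c * t) ^ 2 * σy ^ 2 + t ^ 2 * σ2 ^ 2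
      = σy ^ 2 * σ2 ^ 2 / S + S * (t - c * σy ^ 2 / S) ^ 2 :=
    hS ▸ one_sub_mul_sq_mul_add_sq_mul (hS ▸ hSpos.ne')
  have hw0 : a - w 0 - c * a * w 1 = 0 := by
    simp only [hw, Matrix.cons_val]
    field_simp
    rw [hS]
    ring
  have hw1 : w 1 = c * σy ^ 2 / S := by simp [hw]
  have hw2 : w 2 + b * w 1 = 0 := by
    simp only [hw, Matrix.cons_val]
    ring
  rw [hrisk, hrisk, hw0, hw2, hsplit, hsplit, hw1, sub_self]
  nlinarith [mul_nonneg hSpos.le (sq_nonneg (v 1 - c * σy ^ 2 / S)),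
    sq_nonneg (a - v 0 - c * a * v 1), sq_nonneg (v 2 + b * v 1)]

/-- Under the linear SCM, the ERM weight vector `w` of Equation (2) is a global
minimizer of the population squared-error risk. -/
theorem erm_weight_is_global_minimizer
    {Ω : Type*} [MeasurableSpace Ω] (P : Measure Ω) [IsProbabilityMeasure P]
    (a b c σ1 σy σ2 σ3 : ℝ)
    (hσ1 : 0 < σ1) (hσy : 0 < σy) (hσ2 : 0 < σ2) (hσ3 : 0 < σ3)
    (u1 uy u2 u3 : Ω → ℝ)
    (hm1 : Measurable u1) (hmy : Measurable uy)
    (hm2 : Measurable u2) (hm3 : Measurable u3)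
    (hindep : iIndepFun ![u1, uy, u2, u3] P)
    (hlaw1 : P.map u1 = gaussianReal 0 (Real.toNNReal (σ1 ^ 2)))
    (hlawy : P.map uy = gaussianReal 0 (Real.toNNReal (σy ^ 2)))
    (hlaw2 : P.map u2 = gaussianReal 0 (Real.toNNReal (σ2 ^ 2)))
    (hlaw3 : P.map u3 = gaussianReal 0 (Real.toNNReal (σ3 ^ 2)))
    (x1 y x2 x3 : Ω → ℝ)
    (hx1 : x1 = u1)
    (hy : y = fun ω => a * x1 ω + uy ω)
    (hx3 : x3 = u3)
    (hx2 : x2 = fun ω => b * x3 ω + c * y ω + u2 ω)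
    (x : Fin 3 → Ω → ℝ) (hx : x = ![x1, x2, x3])
    (S : ℝ) (hS : S = σ2 ^ 2 + c ^ 2 * σy ^ 2)
    (w : Fin 3 → ℝ)
    (hw : w = ![a * σ2 ^ 2 / S, c * σy ^ 2 / S, -(b * c * σy ^ 2) / S]) :
    ∀ v : Fin 3 → ℝ,
      (∫ ω, (y ω - ∑ i, w i * x i ω) ^ 2 ∂P) ≤
        ∫ ω, (y ω - ∑ i, v i * x i ω) ^ 2 ∂P :=
  erm_weight_is_global_minimizer_general P a b c σ1 σy σ2 σ3 hσ2 u1 uy u2 u3 hindep hlaw1 hlawy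
    hlaw2 hlaw3 x1 y x2 x3 hx1 hy hx3 hx2 x hx S hS w hw
end

section
/- Co-parent intervention does not change the model output: for the ERM weight vector w of Equation (2), every point (x1, x2, x3) ∈ ℝ³, and every real perturbation η3, the intervention do(x3 = x3 + η3) produces the counterfactual adversarial example x^{adv} = (x1, x2 + b·η3, x3 + η3) (since the effect b·η3 propagates to the child x2), and ⟨w, x^{adv}⟩ = ⟨w, (x1, x2, x3)⟩; equivalently, w2·b + w3 = 0 for the second and third coordinates of w. -/
/-! The intervention moves `x` along `(0, b, 1)`, so a linear model's output moves by
`η3 (b w₂ + w₃)`. The ERM weights see `x₃` only through the residual `x₂ - b x₃` of the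
child, which forces `w₃ = -b w₂`. -/

open Matrix

theorem dotProduct_coparent_shift {R : Type*} [CommRing R] (w : Fin 3 → R)
    (b x1 x2 x3 η : R) :
    w ⬝ᵥ ![x1, x2 + b * η, x3 + η] = w ⬝ᵥ ![x1, x2, x3] + η * (w 1 * b + w 2) := by
  simp only [dotProduct, Fin.sum_univ_three, cons_val_zero, cons_val_one, cons_val_two,
    head_cons, tail_cons]
  ring

theorem coparent_intervention_no_shift_general
    (a b c σy σ2 : ℝ)
    (S : ℝ)
    (w : Fin 3 → ℝ)
    (hw : w = ![a * σ2 ^ 2 / S, c * σy ^ 2 / S, -(b * c * σy ^ 2) / S]) :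
    (∀ x1 x2 x3 η3 : ℝ,
      w ⬝ᵥ ![x1, x2 + b * η3, x3 + η3] = w ⬝ᵥ ![x1, x2, x3]) ∧
    w 1 * b + w 2 = 0 := by
  have hbalance : w 1 * b + w 2 = 0 := by
    subst hw
    simp only [cons_val_zero, cons_val_one, cons_val_two, head_cons, tail_cons]
    ring
  refine ⟨fun x1 x2 x3 η3 => ?_, hbalance⟩
  rw [dotProduct_coparent_shift, hbalance, mul_zero, add_zero]

/-- Co-parent intervention does not change the model output: intervening
`do(x3 = x3 + η3)` (whose effect `b η3` propagates to the child `x2`) leaves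
the ERM model's output unchanged; equivalently `w2 · b + w3 = 0`. -/
theorem coparent_intervention_no_shift
    (a b c σ1 σy σ2 σ3 : ℝ)
    (hσ1 : 0 < σ1) (hσy : 0 < σy) (hσ2 : 0 < σ2) (hσ3 : 0 < σ3)
    (S : ℝ) (hS : S = σ2 ^ 2 + c ^ 2 * σy ^ 2)
    (w : Fin 3 → ℝ)
    (hw : w = ![a * σ2 ^ 2 / S, c * σy ^ 2 / S, -(b * c * σy ^ 2) / S]) :
    (∀ x1 x2 x3 η3 : ℝ,
      w ⬝ᵥ ![x1, x2 + b * η3, x3 + η3] = w ⬝ᵥ ![x1, x2, x3]) ∧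
    w 1 * b + w 2 = 0 :=
  coparent_intervention_no_shift_general a b c σy σ2 S w hw
end
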